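/- Let k ≥ 1, let a' be a (k+1)-block in word s ending at position n_{a'}, b' a (k+1)-block in word t ending at n_{b'}, whose parent k-blocks a and b satisfy a ∼_k b and a' ∼_{k+1} b' with a' the i-th child of a and b' the i-th child of b for some i > 1. Then alph(s[n_{a'} : n_a − 1]) = alph(t[n_{b'} : n_b − 1]). -/

import Mathlib

def SF {α : Type*} (k : ℕ) (w : List α) : Set (List α) :=
  {u | u.Sublist w ∧ u.length ≤ k}

def SimEq {α : Type*} (k : ℕ) (u v : List α) : Prop := SF k u = SF k v

def alph {α : Type*} (w : List α) : Set α := {x | x ∈ w}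

/-- The factor `w[i : l]` (positions `i` through `l` inclusive, 0-indexed). -/
def factor {α : Type*} (w : List α) (i l : ℕ) : List α :=
  (w.drop i).take (l + 1 - i)

/-- `[m, n]` is a k-block of `w`: a maximal interval of pairwise k-equivalent
positions. -/
def IsBlock {α : Type*} (k : ℕ) (w : List α) (m n : ℕ) : Prop :=
  m ≤ n ∧ n < w.length ∧
  (∀ i j, m ≤ i → i ≤ n → m ≤ j → j ≤ n → SimEq k (w.drop i) (w.drop j)) ∧
  (m = 0 ∨ ¬ SimEq k (w.drop (m - 1)) (w.drop m)) ∧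
  (n = w.length - 1 ∨ ¬ SimEq k (w.drop n) (w.drop (n + 1)))

/-- Block-to-block k-equivalence across two words: every suffix starting in the
first block is k-equivalent to every suffix starting in the second. -/
def BlocksEq {α : Type*} (k : ℕ) (s t : List α) (ma na mb nb : ℕ) : Prop :=
  ∀ i j, ma ≤ i → i ≤ na → mb ≤ j → j ≤ nb → SimEq k (s.drop i) (t.drop j)

/-!
Let `x` occur at a position `p` of `s[n_{a'} : n_a - 1]`. The suffix `s[p+1 :]` starts inside `a`,
so it is `k`-equivalent to `t[n_b :]`. As `n_b` ends the `k`-block `b`, some word `u` of length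
at most `k` embeds into `t[n_b :]` but not into `t[n_b + 1 :]`. Then `x u` embeds into
`s[n_{a'} :]`, hence, by `a' ∼_{k+1} b'`, into `t[n_{b'} :]`. If `x` did not occur in
`t[n_{b'} : n_b - 1]`, the word `x u` would embed into `t[n_b :]`, forcing `u` into
`t[n_b + 1 :]`. The reverse inclusion is symmetric.
-/

section

variable {α : Type*}

theorem SimEq.sublist_iff {k : ℕ} {v w u : List α} (h : SimEq k v w) (hu : u.length ≤ k) :
    u.Sublist v ↔ u.Sublist w := by
  simpa [SF, hu] using congrArg (u ∈ ·) h

theorem factor_append_drop (w : List α) {i l : ℕ} (h : i ≤ l + 1) :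
    factor w i l ++ w.drop (l + 1) = w.drop i := by
  conv_rhs => rw [← List.take_append_drop (l + 1 - i) (w.drop i), List.drop_drop]
  rw [factor, Nat.add_sub_cancel' h]

theorem exists_drop_eq_cons_of_mem_alph_factor {w : List α} {i l : ℕ} {x : α}
    (hx : x ∈ alph (factor w i l)) :
    ∃ p, i ≤ p ∧ p ≤ l ∧ w.drop p = x :: w.drop (p + 1) := by
  obtain ⟨q, hq, rfl⟩ := List.mem_iff_getElem.1 hx
  have hlen : q < l + 1 - i ∧ q < w.length - i := by
    simpa [factor] using hq
  refine ⟨i + q, by omega, by omega, ?_⟩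
  simp only [factor, List.getElem_take, List.getElem_drop]
  exact List.drop_eq_getElem_cons (by omega)

theorem cons_sublist_of_cons_sublist_append {x : α} {u g d : List α}
    (h : (x :: u).Sublist (g ++ d)) (hx : x ∉ g) : (x :: u).Sublist d := by
  obtain ⟨l₁, l₂, he, h₁, h₂⟩ := List.sublist_append_iff.1 h
  cases l₁ with
  | nil => rwa [he]
  | cons y l₁ =>
    obtain rfl : x = y := List.cons.inj he |>.1
    exact absurd (h₁.subset List.mem_cons_self) hx

theorem exists_sublist_drop_not_sublist_drop_succ {k n : ℕ} {w : List α} (hk : 1 ≤ k)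
    (hn : n < w.length) (hend : n = w.length - 1 ∨ ¬ SimEq k (w.drop n) (w.drop (n + 1))) :
    ∃ u : List α, u.length ≤ k ∧ u.Sublist (w.drop n) ∧ ¬ u.Sublist (w.drop (n + 1)) := by
  rcases hend with hlast | hne
  · refine ⟨[w[n]], hk, ?_, ?_⟩
    · rw [List.drop_eq_getElem_cons hn]
      exact (List.nil_sublist _).cons_cons _
    · simp [List.drop_eq_nil_of_le (show w.length ≤ n + 1 by omega)]
  · have hsub : SF k (w.drop (n + 1)) ⊆ SF k (w.drop n) := fun u hu =>
      ⟨hu.1.trans (w.drop_sublist_drop_left n.le_succ), hu.2⟩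
    obtain ⟨u, ⟨hu, hlen⟩, hnot⟩ := Set.exists_of_ssubset (hsub.ssubset_of_ne (Ne.symm hne))
    exact ⟨u, hlen, hu, fun h => hnot ⟨h, hlen⟩⟩

theorem alph_factor_subset_of_simEq {k i n j m : ℕ} {s t : List α} (hk : 1 ≤ k)
    (hm : m < t.length) (hend : m = t.length - 1 ∨ ¬ SimEq k (t.drop m) (t.drop (m + 1)))
    (hin : i < n) (hjm : j < m)
    (hsuf : ∀ p, i < p → p ≤ n → SimEq k (s.drop p) (t.drop m))
    (hstart : SimEq (k + 1) (s.drop i) (t.drop j)) :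
    alph (factor s i (n - 1)) ⊆ alph (factor t j (m - 1)) := by
  intro x hx
  by_contra hxt
  obtain ⟨p, hip, hpn, hsp⟩ := exists_drop_eq_cons_of_mem_alph_factor hx
  obtain ⟨u, hlen, hut, hnot⟩ := exists_sublist_drop_not_sublist_drop_succ hk hm hend
  have hus : u.Sublist (s.drop (p + 1)) :=
    ((hsuf (p + 1) (by omega) (by omega)).sublist_iff hlen).2 hut
  have hxus : (x :: u).Sublist (s.drop i) :=
    hsp ▸ hus.cons_cons x |>.trans (s.drop_sublist_drop_left hip)
  have hsplit : factor t j (m - 1) ++ t.drop m = t.drop j := by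
    simpa [Nat.sub_add_cancel (by omega : 1 ≤ m)] using
      factor_append_drop t (by omega : j ≤ m - 1 + 1)
  have hxut : (x :: u).Sublist (factor t j (m - 1) ++ t.drop m) :=
    hsplit ▸ (hstart.sublist_iff (by simpa using hlen)).1 hxus
  have hxum : (x :: u).Sublist (t[m] :: t.drop (m + 1)) :=
    List.drop_eq_getElem_cons hm ▸ cons_sublist_of_cons_sublist_append hxut hxt
  exact hnot hxum.tail

end

/-- If the k-blocks a (in s) and b (in t) satisfy a ∼_k b, the (k+1)-blocks
a' ⊆ a and b' ⊆ b satisfy a' ∼_{k+1} b', and a', b' are the i-th children of a, b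
for some i > 1 (i.e., they are not the rightmost children: n_{a'} < n_a and
n_{b'} < n_b), then alph(s[n_{a'} : n_a − 1]) = alph(t[n_{b'} : n_b − 1]). -/
theorem pcon_child_alph {α : Type*} (k : ℕ) (hk : 1 ≤ k)
    (s t : List α) (ma na mb nb ma' na' mb' nb' : ℕ)
    (ha : IsBlock k s ma na) (hb : IsBlock k t mb nb)
    (hab : BlocksEq k s t ma na mb nb)
    (ha' : IsBlock (k + 1) s ma' na') (ha'sub : ma ≤ ma' ∧ na' ≤ na)
    (hb' : IsBlock (k + 1) t mb' nb') (hb'sub : mb ≤ mb' ∧ nb' ≤ nb)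
    (hab' : BlocksEq (k + 1) s t ma' na' mb' nb')
    (hnotright : na' < na ∧ nb' < nb) :
    alph (factor s na' (na - 1)) = alph (factor t nb' (nb - 1)) := by
  have hstart : SimEq (k + 1) (s.drop na') (t.drop nb') :=
    hab' na' nb' ha'.1 le_rfl hb'.1 le_rfl
  have hma : ma ≤ na' := ha'sub.1.trans ha'.1
  have hmb : mb ≤ nb' := hb'sub.1.trans hb'.1
  exact subset_antisymm
    (alph_factor_subset_of_simEq hk hb.2.1 hb.2.2.2.2 hnotright.1 hnotright.2
      (fun p hp hpn => hab p nb (by omega) hpn hb.1 le_rfl) hstart)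
    (alph_factor_subset_of_simEq hk ha.2.1 ha.2.2.2.2 hnotright.2 hnotright.1
      (fun p hp hpn => (hab na p ha.1 le_rfl (by omega) hpn).symm) hstart.symm)
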